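/- Let N ≥ 1 be an integer, ε := 1/N, β : ℤ → [0,1] be 2N-periodic, I := {ℓ ∈ {−N+1,…,N} : 0 < β_{ℓ+j} < 1 for some j ∈ {−2,−1,1,2}}, K := #I, and suppose (D^{(j)}β)_ℓ = 0 for all ℓ ∉ I and j = 1,2,3, and that ‖D^{(j)}β‖_{ℓ∞} ≤ C_β (Kε)^{−j} for j = 1, 2, 3 for some constant C_β. Suppose there is n ≥ 1 with J := {1,…,n} ⊂ I, β_1 = 0, β_n = 1, and 0 ∉ I, n+1 ∉ I. Then the number of indices ℓ ∈ J with (D³β)_ℓ ≤ −(1/2)(εK)^{−3} is at least K/(2C_β). -/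

import Mathlib

open Finset

noncomputable section

/-- mesh size ε = 1/N -/
def eps (N : ℕ) : ℝ := 1 / N

/-- the periodic cell {-N+1, …, N} -/
def cell (N : ℕ) : Finset ℤ := Finset.Icc (-(N : ℤ) + 1) N

/-- 2N-periodicity -/
def Per (N : ℕ) (u : ℤ → ℝ) : Prop := ∀ ℓ : ℤ, u (ℓ + 2 * N) = u ℓ

/-- zero mean over a period -/
def MeanZero (N : ℕ) (u : ℤ → ℝ) : Prop := ∑ ℓ ∈ cell N, u ℓ = 0

/-- first discrete derivative (Du)_ℓ = (u_ℓ - u_{ℓ-1})/ε -/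
def D (N : ℕ) (u : ℤ → ℝ) (ℓ : ℤ) : ℝ := (u ℓ - u (ℓ - 1)) / eps N

/-- second discrete derivative (D²u)_ℓ = ((Du)_{ℓ+1} - (Du)_ℓ)/ε -/
def D2 (N : ℕ) (u : ℤ → ℝ) (ℓ : ℤ) : ℝ := (D N u (ℓ + 1) - D N u ℓ) / eps N

/-- third discrete derivative (D³u)_ℓ = ((D²u)_ℓ - (D²u)_{ℓ-1})/ε -/
def D3 (N : ℕ) (u : ℤ → ℝ) (ℓ : ℤ) : ℝ := (D2 N u ℓ - D2 N u (ℓ - 1)) / eps N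

/-- the ℓ²_ε inner product ⟨u,w⟩ = ε Σ u_ℓ w_ℓ -/
def ip (N : ℕ) (u w : ℤ → ℝ) : ℝ := ∑ ℓ ∈ cell N, eps N * (u ℓ * w ℓ)

/-- the squared ℓ²_ε norm ‖u‖² = ε Σ |u_ℓ|² -/
def nsq (N : ℕ) (u : ℤ → ℝ) : ℝ := ∑ ℓ ∈ cell N, eps N * |u ℓ| ^ 2

attribute [local instance] Classical.propDecidable

/-- the interface (blending) index set -/
def interf (N : ℕ) (β : ℤ → ℝ) : Finset ℤ :=
  (cell N).filter fun ℓ =>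
    ∃ j ∈ ({-2, -1, 1, 2} : Finset ℤ), 0 < β (ℓ + j) ∧ β (ℓ + j) < 1

/-!
Since `β` climbs from `0` to `1` within `n ≤ K` steps, some increment has slope
`Dβ ≥ (Kε)⁻¹`, while `Dβ ≤ 0` at `1` and at `n + 1` (as `β₀ ≥ 0 = β₁` and `βₙ = 1 ≥ βₙ₊₁`).
The discrete mean value theorem, applied to `Dβ` on either side of the steep step, gives
points `l₁ < l₂` in `J` with `D²β l₁ ≥ (Kε)⁻²` and `D²β l₂ ≤ -(Kε)⁻²`, so `D³β` sums to at most
`-2K (Kε)⁻³` over `(l₁, l₂]`. At most `K` terms exceed `-(Kε)⁻³/2`, and every term is at least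
`-C_β (Kε)⁻³`, so at least `3K / (2C_β)` terms lie below `-(Kε)⁻³/2`.
-/

section DiscreteDerivative

variable {N : ℕ}

lemma sum_Ioc_sub_pred (u : ℤ → ℝ) {a b : ℤ} (hab : a ≤ b) :
    ∑ ℓ ∈ Ioc a b, (u ℓ - u (ℓ - 1)) = u b - u a := by
  induction b, hab using Int.leInduction with
  | base => simp
  | succ b hab ih =>
    rw [← insert_Ioc_right_eq_Ioc_add_one hab, sum_insert (by simp), ih, add_sub_cancel_right]
    ring

lemma sum_Ioc_D (u : ℤ → ℝ) {a b : ℤ} (hab : a ≤ b) :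
    ∑ ℓ ∈ Ioc a b, D N u ℓ = (u b - u a) / eps N := by
  simp only [D, ← sum_div, sum_Ioc_sub_pred u hab]

lemma eps_nonneg : 0 ≤ eps N := by
  unfold eps; positivity

lemma sum_Ioc_const_eq (u : ℤ → ℝ) {a b : ℤ} (hab : a < b) :
    ∑ _ℓ ∈ Ioc a b, (u b - u a) / ((b - a) * eps N) = (u b - u a) / eps N := by
  have hba : ((b : ℝ) - a) ≠ 0 := sub_ne_zero.mpr (by exact_mod_cast hab.ne')
  rw [sum_const, Int.card_Ioc, nsmul_eq_mul, show (((b - a).toNat : ℕ) : ℝ) = (b : ℝ) - a by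
    rw [← Int.cast_natCast, Int.toNat_of_nonneg (by omega), Int.cast_sub]]
  field_simp

lemma exists_mem_Ioc_slope_le_D (u : ℤ → ℝ) {a b : ℤ} (hab : a < b) :
    ∃ ℓ ∈ Ioc a b, (u b - u a) / ((b - a) * eps N) ≤ D N u ℓ :=
  exists_le_of_sum_le (nonempty_Ioc.mpr hab) <| by
    rw [sum_Ioc_const_eq u hab, sum_Ioc_D u hab.le]

lemma exists_mem_Ioc_D_le_slope (u : ℤ → ℝ) {a b : ℤ} (hab : a < b) :
    ∃ ℓ ∈ Ioc a b, D N u ℓ ≤ (u b - u a) / ((b - a) * eps N) :=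
  exists_le_of_sum_le (nonempty_Ioc.mpr hab) <| by
    rw [sum_Ioc_const_eq u hab, sum_Ioc_D u hab.le]

lemma D2_eq_D_shift (u : ℤ → ℝ) (ℓ : ℤ) :
    D2 N u ℓ = D N (fun k => D N u (k + 1)) ℓ := by
  simp only [D2, D, sub_add_cancel]

lemma eps_pos (hN : 0 < N) : 0 < eps N := by
  unfold eps; positivity

lemma exists_mem_Ico_le_D2 (hN : 0 < N) (u : ℤ → ℝ) {p m : ℤ} {s L : ℝ} (hpm : p < m)
    (hL : (m : ℝ) - p ≤ L) (hs : 0 ≤ s) (hrise : s ≤ D N u m - D N u p) :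
    ∃ l ∈ Ico p m, s / (L * eps N) ≤ D2 N u l := by
  obtain ⟨l, hl, hslope⟩ :=
    exists_mem_Ioc_slope_le_D (N := N) (fun k => D N u (k + 1)) (show p - 1 < m - 1 by omega)
  refine ⟨l + 1 - 1, by simp only [mem_Ioc, mem_Ico] at hl ⊢; omega, ?_⟩
  have hmp : (0 : ℝ) < m - p := sub_pos.mpr (by exact_mod_cast hpm)
  rw [add_sub_cancel_right, D2_eq_D_shift]
  refine le_trans ?_ hslope
  push_cast
  simp only [sub_add_cancel, sub_sub_sub_cancel_right]
  exact div_le_div₀ (hs.trans hrise) hrise (mul_pos hmp (eps_pos hN))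
    (mul_le_mul_of_nonneg_right hL eps_nonneg)

lemma exists_mem_Ico_D2_le (hN : 0 < N) (u : ℤ → ℝ) {m q : ℤ} {s L : ℝ} (hmq : m < q)
    (hL : (q : ℝ) - m ≤ L) (hs : 0 ≤ s) (hfall : s ≤ D N u m - D N u q) :
    ∃ l ∈ Ico m q, D2 N u l ≤ -(s / (L * eps N)) := by
  obtain ⟨l, hl, hslope⟩ :=
    exists_mem_Ioc_D_le_slope (N := N) (fun k => D N u (k + 1)) (show m - 1 < q - 1 by omega)
  refine ⟨l + 1 - 1, by simp only [mem_Ioc, mem_Ico] at hl ⊢; omega, ?_⟩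
  have hqm : (0 : ℝ) < q - m := sub_pos.mpr (by exact_mod_cast hmq)
  rw [add_sub_cancel_right, D2_eq_D_shift]
  refine hslope.trans ?_
  push_cast
  simp only [sub_add_cancel, sub_sub_sub_cancel_right]
  rw [le_neg, ← neg_div, neg_sub]
  exact div_le_div₀ (hs.trans hfall) hfall (mul_pos hqm (eps_pos hN))
    (mul_le_mul_of_nonneg_right hL eps_nonneg)

lemma exists_Ioc_sum_D3_le (hN : 0 < N) {u : ℤ → ℝ} {n : ℤ} {K : ℝ} (hn : 1 < n)
    (hnK : (n : ℝ) ≤ K) (hD1 : D N u 1 ≤ 0) (hDn : D N u (n + 1) ≤ 0) (hrise : 1 ≤ u n - u 1) :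
    ∃ l₁ l₂, 1 ≤ l₁ ∧ l₂ ≤ n ∧
      ∑ ℓ ∈ Ioc l₁ l₂, D3 N u ℓ ≤ -(2 * K) * ((K * eps N) ^ 3)⁻¹ := by
  have hε := eps_pos hN
  have hn1 : (1 : ℝ) < n := by exact_mod_cast hn
  have hK : 0 < K := by linarith
  obtain ⟨m, hm, hslope⟩ := exists_mem_Ioc_slope_le_D (N := N) u hn
  rw [mem_Ioc] at hm
  have hm2 : (2 : ℝ) ≤ m := by exact_mod_cast hm.1
  have hmn : (m : ℝ) ≤ n := by exact_mod_cast hm.2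
  have hsteep : (K * eps N)⁻¹ ≤ D N u m := by
    refine le_trans ?_ hslope
    rw [inv_eq_one_div]
    push_cast
    exact div_le_div₀ (by linarith) hrise (by nlinarith) (by nlinarith)
  obtain ⟨l₁, hl₁, hup⟩ :=
    exists_mem_Ico_le_D2 hN u (L := K) hm.1 (by push_cast; linarith) (by positivity)
      (by linarith : (K * eps N)⁻¹ ≤ D N u m - D N u 1)
  obtain ⟨l₂, hl₂, hdown⟩ :=
    exists_mem_Ico_D2_le hN u (L := K) (show m < n + 1 by omega) (by push_cast; linarith)
      (by positivity) (by linarith : (K * eps N)⁻¹ ≤ D N u m - D N u (n + 1))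
  rw [mem_Ico] at hl₁ hl₂
  refine ⟨l₁, l₂, hl₁.1, by omega, ?_⟩
  rw [show D3 N u = D N (D2 N u) from rfl, sum_Ioc_D _ (by omega)]
  calc (D2 N u l₂ - D2 N u l₁) / eps N
        ≤ (-((K * eps N)⁻¹ / (K * eps N)) - (K * eps N)⁻¹ / (K * eps N)) / eps N := by
        gcongr
    _ = -(2 * K) * ((K * eps N) ^ 3)⁻¹ := by
        field_simp
        ring

end DiscreteDerivative

lemma card_filter_mul_add_card_mul_le_sum {ι : Type*} (s : Finset ι) (f : ι → ℝ) {b t : ℝ}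
    (ht : t ≤ 0) (hb : ∀ i ∈ s, b ≤ f i) :
    #(s.filter fun i => f i ≤ t) * b + #s * t ≤ ∑ i ∈ s, f i := by
  rw [← sum_filter_add_sum_filter_not s (fun i => f i ≤ t)]
  have hlow : #(s.filter fun i => f i ≤ t) * b ≤ ∑ i ∈ s with f i ≤ t, f i := by
    simpa using card_nsmul_le_sum _ f b fun i hi => hb i (mem_filter.mp hi).1
  have hhigh : #(s.filter fun i => ¬f i ≤ t) * t ≤ ∑ i ∈ s with ¬f i ≤ t, f i := by
    simpa using card_nsmul_le_sum _ f t fun i hi => (not_le.mp (mem_filter.mp hi).2).le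
  have hcard : (#s : ℝ) * t ≤ #(s.filter fun i => ¬f i ≤ t) * t :=
    mul_le_mul_of_nonpos_right (by exact_mod_cast card_filter_le _ _) ht
  linarith

lemma le_card_filter_of_sum_le {ι : Type*} {s : Finset ι} {f : ι → ℝ} {K C x : ℝ}
    (hx : 0 < x) (hC : 0 < C) (hs : (#s : ℝ) ≤ K) (hlow : ∀ i ∈ s, -(C * x) ≤ f i)
    (hsum : ∑ i ∈ s, f i ≤ -(2 * K) * x) :
    3 * K / (2 * C) ≤ #(s.filter fun i => f i ≤ -(1 / 2) * x) := by
  have hcount := card_filter_mul_add_card_mul_le_sum s f (t := -(1 / 2) * x) (by linarith) hlow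
  rw [div_le_iff₀ (by positivity)]
  refine le_of_mul_le_mul_right ?_ hx
  nlinarith [mul_le_mul_of_nonneg_right hs hx.le]

theorem stmt_9_general (N : ℕ) (hN : 1 ≤ N) (Cβ : ℝ) (hCβ : 0 < Cβ)
    (β : ℤ → ℝ)
    (hrange : ∀ ℓ : ℤ, β ℓ ∈ Set.Icc (0 : ℝ) 1)
    (hne : (cell N).Nonempty)
    (hb3 : (cell N).sup' hne (fun ℓ => |D3 N β ℓ|)
            ≤ Cβ * ((((interf N β).card : ℝ) * eps N) ^ 3)⁻¹)
    (n : ℤ) (hn : 1 ≤ n)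
    (hJ : Finset.Icc (1 : ℤ) n ⊆ interf N β)
    (hβ1 : β 1 = 0) (hβn : β n = 1) :
    (((Finset.Icc (1 : ℤ) n).filter fun ℓ =>
        D3 N β ℓ ≤ -(1 / 2) * ((eps N * ((interf N β).card : ℝ)) ^ 3)⁻¹).card : ℝ)
      ≥ ((interf N β).card : ℝ) / (2 * Cβ) := by
  have hnK : (n : ℝ) ≤ (interf N β).card := by
    have := card_le_card hJ
    rw [Int.card_Icc] at this
    exact_mod_cast (show n ≤ ((interf N β).card : ℤ) by omega)
  set K : ℝ := ((interf N β).card : ℝ)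
  have hn1 : 1 < n := lt_of_le_of_ne hn fun h => by simp [← h, hβ1] at hβn
  have hD1 : D N β 1 ≤ 0 :=
    div_nonpos_of_nonpos_of_nonneg (by linarith [(hrange (1 - 1)).1]) eps_nonneg
  have hDn : D N β (n + 1) ≤ 0 :=
    div_nonpos_of_nonpos_of_nonneg (by simp [hβn, (hrange (n + 1)).2]) eps_nonneg
  obtain ⟨l₁, l₂, hl₁, hl₂, hsum⟩ := exists_Ioc_sum_D3_le (K := K) hN hn1
    hnK hD1 hDn (by rw [hβ1, hβn]; norm_num)
  have hsub : Ioc l₁ l₂ ⊆ Icc 1 n := Ioc_subset_Icc_self.trans (Icc_subset_Icc hl₁ hl₂)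
  have hD3 : ∀ ℓ ∈ Ioc l₁ l₂, -(Cβ * ((K * eps N) ^ 3)⁻¹) ≤ D3 N β ℓ := fun ℓ hℓ =>
    neg_le_of_abs_le <| (le_sup' (fun ℓ => |D3 N β ℓ|)
      (filter_subset _ _ (hJ (hsub hℓ)))).trans hb3
  have hK : 0 < K := by linarith [show (1 : ℝ) < n by exact_mod_cast hn1]
  have hx : 0 < ((K * eps N) ^ 3)⁻¹ := by have := eps_pos hN; positivity
  rw [mul_comm (eps N) K, ge_iff_le]
  calc K / (2 * Cβ) ≤ 3 * K / (2 * Cβ) := by gcongr; linarith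
    _ ≤ _ := le_card_filter_of_sum_le hx hCβ
          (Nat.cast_le.mpr (card_le_card (hsub.trans hJ))) hD3 hsum
    _ ≤ _ := Nat.cast_le.mpr (card_le_card (filter_subset_filter _ hsub))

/-- a quasi-optimal blending function has many indices in the
transition interval with a large negative third derivative: the number of
`ℓ ∈ J = {1,…,n}` with `(D³β)_ℓ ≤ −(1/2)(εK)^{−3}` is at least `K/(2C_β)`. -/
theorem stmt_9 (N : ℕ) (hN : 1 ≤ N) (Cβ : ℝ) (hCβ : 0 < Cβ)
    (β : ℤ → ℝ) (hβper : Per N β)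
    (hrange : ∀ ℓ : ℤ, β ℓ ∈ Set.Icc (0 : ℝ) 1)
    (hsupp : ∀ ℓ ∈ cell N, ℓ ∉ interf N β →
      D N β ℓ = 0 ∧ D2 N β ℓ = 0 ∧ D3 N β ℓ = 0)
    (hne : (cell N).Nonempty)
    (hb1 : (cell N).sup' hne (fun ℓ => |D N β ℓ|)
            ≤ Cβ * (((interf N β).card : ℝ) * eps N)⁻¹)
    (hb2 : (cell N).sup' hne (fun ℓ => |D2 N β ℓ|)
            ≤ Cβ * ((((interf N β).card : ℝ) * eps N) ^ 2)⁻¹)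
    (hb3 : (cell N).sup' hne (fun ℓ => |D3 N β ℓ|)
            ≤ Cβ * ((((interf N β).card : ℝ) * eps N) ^ 3)⁻¹)
    (n : ℤ) (hn : 1 ≤ n)
    (hJ : Finset.Icc (1 : ℤ) n ⊆ interf N β)
    (hβ1 : β 1 = 0) (hβn : β n = 1)
    (h0 : (0 : ℤ) ∉ interf N β) (hn1 : n + 1 ∉ interf N β) :
    (((Finset.Icc (1 : ℤ) n).filter fun ℓ =>
        D3 N β ℓ ≤ -(1 / 2) * ((eps N * ((interf N β).card : ℝ)) ^ 3)⁻¹).card : ℝ)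
      ≥ ((interf N β).card : ℝ) / (2 * Cβ) :=
  stmt_9_general N hN Cβ hCβ β hrange hne hb3 n hn hJ hβ1 hβn
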